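/- arXiv:1103.3945 — 6 statements merged into one kernel-verified Lean document; each statement's English description precedes it below -/
import Mathlib

section
/- If the matrix equation A X B = C is consistent, then every solution X can be written in the form X = A† C B† + H − A† A H B B† for some matrix H ∈ ℝ^{n×p}; conversely, every matrix of this form is a solution. -/
open Matrix Kronecker

/-- `Ad` satisfies the four Penrose conditions for `A`, i.e. `Ad = A†`. -/
def IsMP {m n : Type*} [Fintype m] [Fintype n] [DecidableEq m] [DecidableEq n]
    (A : Matrix m n ℝ) (Ad : Matrix n m ℝ) : Prop :=
  A * Ad * A = A ∧ Ad * A * Ad = Ad ∧ (A * Ad)ᵀ = A * Ad ∧ (Ad * A)ᵀ = Ad * A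

/-- Frobenius norm. -/
noncomputable def frobNorm {m n : Type*} [Fintype m] [Fintype n]
    (M : Matrix m n ℝ) : ℝ :=
  Real.sqrt (∑ i, ∑ j, (M i j) ^ 2)

/-- Euclidean norm of a vector. -/
noncomputable def enorm {n : Type*} [Fintype n] (v : n → ℝ) : ℝ :=
  Real.sqrt (∑ i, (v i) ^ 2)

/-- Column-stacking vectorization: `vec M (j, i) = M i j`. -/
def vec {m n : Type*} (M : Matrix m n ℝ) : n × m → ℝ := fun p => M p.2 p.1

theorem stmt_2 {m n p r : ℕ}
    (A : Matrix (Fin m) (Fin n) ℝ) (B : Matrix (Fin p) (Fin r) ℝ) (C : Matrix (Fin m) (Fin r) ℝ)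
    (Ad : Matrix (Fin n) (Fin m) ℝ) (Bd : Matrix (Fin r) (Fin p) ℝ)
    (hA : IsMP A Ad) (hB : IsMP B Bd)
    (hcon : ∃ X : Matrix (Fin n) (Fin p) ℝ, A * X * B = C) :
    ∀ X : Matrix (Fin n) (Fin p) ℝ,
      A * X * B = C ↔
        ∃ H : Matrix (Fin n) (Fin p) ℝ, X = Ad * C * Bd + H - Ad * A * H * B * Bd := by
  obtain ⟨X0, hX0⟩ := hcon
  obtain ⟨hA1, -, -, -⟩ := hA
  obtain ⟨hB1, -, -, -⟩ := hB
  have key : A * (Ad * C * Bd) * B = C := by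
    rw [← hX0]
    calc A * (Ad * (A * X0 * B) * Bd) * B
        = (A * Ad * A) * X0 * (B * Bd * B) := by simp only [Matrix.mul_assoc]
      _ = A * X0 * B := by rw [hA1, hB1]
  intro X
  constructor
  · intro hX
    refine ⟨X, ?_⟩
    have h2 : Ad * A * X * B * Bd = Ad * C * Bd := by
      rw [← hX]; simp only [Matrix.mul_assoc]
    rw [h2]; abel
  · rintro ⟨H, rfl⟩
    have h3 : A * (Ad * A * H * B * Bd) * B = A * H * B := by
      calc A * (Ad * A * H * B * Bd) * B
          = (A * Ad * A) * H * (B * Bd * B) := by simp only [Matrix.mul_assoc]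
        _ = A * H * B := by rw [hA1, hB1]
    rw [sub_eq_add_neg]
    simp only [Matrix.mul_add, Matrix.add_mul, Matrix.mul_neg, Matrix.neg_mul]
    rw [h3, key]
    abel
end

section
/- Every least squares solution of the (possibly inconsistent) matrix equation A X B = C can be written as X = A† C B† + H − A† A H B B† for some H ∈ ℝ^{n×p}, and conversely every matrix of this form is a least squares solution, i.e., minimizes ‖A X B − C‖ in the Frobenius norm. -/
open Matrix Kronecker

/-- Sum of squares of entries. -/
noncomputable def sq2 {m n : Type*} [Fintype m] [Fintype n] (M : Matrix m n ℝ) : ℝ :=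
  ∑ i, ∑ j, (M i j) ^ 2

/-- Frobenius inner product. -/
noncomputable def ipF {m n : Type*} [Fintype m] [Fintype n] (M N : Matrix m n ℝ) : ℝ :=
  ∑ i, ∑ j, M i j * N i j

lemma sq2_nonneg {m n : Type*} [Fintype m] [Fintype n] (M : Matrix m n ℝ) :
    0 ≤ sq2 M :=
  Finset.sum_nonneg fun _ _ => Finset.sum_nonneg fun _ _ => sq_nonneg _

lemma ipF_eq_trace {m n : Type*} [Fintype m] [Fintype n] (M N : Matrix m n ℝ) :
    ipF M N = Matrix.trace (M * Nᵀ) := by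
  simp [ipF, Matrix.trace, Matrix.mul_apply, Matrix.diag]

lemma sq2_add {m n : Type*} [Fintype m] [Fintype n] (M N : Matrix m n ℝ) :
    sq2 (M + N) = sq2 M + 2 * ipF M N + sq2 N := by
  simp only [sq2, ipF, Matrix.add_apply, add_sq, Finset.sum_add_distrib,
    Finset.mul_sum]
  ring

set_option maxHeartbeats 1600000 in
theorem stmt_5 {m n p r : ℕ}
    (A : Matrix (Fin m) (Fin n) ℝ) (B : Matrix (Fin p) (Fin r) ℝ) (C : Matrix (Fin m) (Fin r) ℝ)
    (Ad : Matrix (Fin n) (Fin m) ℝ) (Bd : Matrix (Fin r) (Fin p) ℝ)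
    (hA : IsMP A Ad) (hB : IsMP B Bd) :
    ∀ X : Matrix (Fin n) (Fin p) ℝ,
      (∀ Y : Matrix (Fin n) (Fin p) ℝ, frobNorm (A * X * B - C) ≤ frobNorm (A * Y * B - C)) ↔
        ∃ H : Matrix (Fin n) (Fin p) ℝ, X = Ad * C * Bd + H - Ad * A * H * B * Bd := by
  obtain ⟨hA1, hA2, hA3, hA4⟩ := hA
  obtain ⟨hB1, hB2, hB3, hB4⟩ := hB
  set X0 : Matrix (Fin n) (Fin p) ℝ := Ad * C * Bd with hX0
  set E : Matrix (Fin m) (Fin r) ℝ := A * X0 * B - C with hE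
  -- basic identities
  have h1 : Aᵀ * (A * Ad) = Aᵀ := by
    calc Aᵀ * (A * Ad) = Aᵀ * (A * Ad)ᵀ := by rw [hA3]
      _ = (A * Ad * A)ᵀ := (Matrix.transpose_mul _ _).symm
      _ = Aᵀ := by rw [hA1]
  have h2 : Bd * B * Bᵀ = Bᵀ := by
    calc Bd * B * Bᵀ = (Bd * B)ᵀ * Bᵀ := by rw [hB4]
      _ = (B * (Bd * B))ᵀ := (Matrix.transpose_mul _ _).symm
      _ = Bᵀ := by rw [← Matrix.mul_assoc, hB1]
  have key : Aᵀ * (A * X0 * B) * Bᵀ = Aᵀ * C * Bᵀ := by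
    have e1 : Aᵀ * (A * (Ad * C * Bd) * B) * Bᵀ
        = Aᵀ * (A * Ad) * C * (Bd * B * Bᵀ) := by
      simp only [Matrix.mul_assoc]
    rw [hX0, e1, h1, h2]
  have keyE : Aᵀ * E * Bᵀ = 0 := by
    rw [hE, Matrix.mul_sub, Matrix.sub_mul, key, sub_self]
  have keyE' : B * Eᵀ * A = 0 := by
    have := congrArg Matrix.transpose keyE
    simp only [Matrix.transpose_mul, Matrix.transpose_transpose, Matrix.transpose_zero] at this
    rw [Matrix.mul_assoc]
    exact this
  -- orthogonality
  have orth : ∀ M : Matrix (Fin n) (Fin p) ℝ, ipF (A * M * B) E = 0 := by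
    intro M
    rw [ipF_eq_trace]
    have e1 : A * M * B * Eᵀ = A * (M * (B * Eᵀ)) := by simp [Matrix.mul_assoc]
    rw [e1, Matrix.trace_mul_comm]
    have e2 : M * (B * Eᵀ) * A = M * (B * Eᵀ * A) := by simp [Matrix.mul_assoc]
    rw [e2, keyE', Matrix.mul_zero, Matrix.trace_zero]
  -- Pythagoras
  have pyth : ∀ Y : Matrix (Fin n) (Fin p) ℝ,
      sq2 (A * Y * B - C) = sq2 (A * (Y - X0) * B) + sq2 E := by
    intro Y
    have hd : A * Y * B - C = A * (Y - X0) * B + E := by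
      rw [Matrix.mul_sub, Matrix.sub_mul, hE]
      abel
    rw [hd, sq2_add, orth]
    ring
  have hback : ∀ X : Matrix (Fin n) (Fin p) ℝ, A * X * B = A * X0 * B →
      ∀ Y : Matrix (Fin n) (Fin p) ℝ,
        frobNorm (A * X * B - C) ≤ frobNorm (A * Y * B - C) := by
    intro X hX Y
    show Real.sqrt (sq2 (A * X * B - C)) ≤ Real.sqrt (sq2 (A * Y * B - C))
    apply Real.sqrt_le_sqrt
    rw [pyth Y, show A * X * B - C = E by rw [hX, hE]]
    have hnn := sq2_nonneg (A * (Y - X0) * B)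
    linarith
  intro X
  have frob_def : ∀ (M : Matrix (Fin m) (Fin r) ℝ), frobNorm M = Real.sqrt (sq2 M) := by
    intro M; rfl
  constructor
  · intro hmin
    -- minimality at X0 forces A X B = A X0 B
    have hle : frobNorm (A * X * B - C) ≤ frobNorm E := by
      have := hmin X0
      rwa [← hE] at this
    have hsq : sq2 (A * X * B - C) ≤ sq2 E := by
      rw [frob_def, frob_def] at hle
      exact (Real.sqrt_le_sqrt_iff (sq2_nonneg _)).mp hle
    have h0 : sq2 (A * (X - X0) * B) = 0 := by
      have hp := pyth X
      have hnn := sq2_nonneg (A * (X - X0) * B)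
      linarith
    have hz : A * (X - X0) * B = 0 := by
      ext i j
      have h1' := (Finset.sum_eq_zero_iff_of_nonneg
        (fun i _ => Finset.sum_nonneg fun j _ => sq_nonneg ((A * (X - X0) * B) i j))).mp h0 i
        (Finset.mem_univ i)
      have h2' := (Finset.sum_eq_zero_iff_of_nonneg
        (fun j _ => sq_nonneg ((A * (X - X0) * B) i j))).mp h1' j (Finset.mem_univ j)
      simpa using (pow_eq_zero_iff two_ne_zero).mp h2'
    have hX : A * X * B = A * X0 * B := by
      have : A * X * B - A * X0 * B = 0 := by
        rw [← Matrix.sub_mul, ← Matrix.mul_sub]; exact hz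
      exact sub_eq_zero.mp this
    refine ⟨X - X0, ?_⟩
    have e1 : Ad * A * (X - X0) * B * Bd = Ad * (A * X * B) * Bd - Ad * (A * X0 * B) * Bd := by
      simp only [Matrix.mul_sub, Matrix.sub_mul, Matrix.mul_assoc]
    rw [hX] at e1
    rw [e1, sub_self]
    abel
  · rintro ⟨H, hXeq⟩
    have hAZB : A * (Ad * A * H * B * Bd) * B = A * H * B := by
      have e1 : A * (Ad * A * H * B * Bd) * B = A * Ad * A * H * (B * Bd * B) := by
        simp only [Matrix.mul_assoc]
      rw [e1, hA1, hB1]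
    apply hback
    rw [hXeq]
    have e2 : A * (Ad * C * Bd + H - Ad * A * H * B * Bd) * B
        = A * (Ad * C * Bd) * B + A * H * B - A * (Ad * A * H * B * Bd) * B := by
      simp only [Matrix.mul_add, Matrix.add_mul, Matrix.mul_sub, Matrix.sub_mul]
    rw [e2, hAZB, add_sub_cancel_right, hX0]
end

section
/- Suppose the matrix equation A X B = C is consistent and X₀ ∈ ℝ^{n×p} is given. Then X̂ = A† C B† + X₀ − A† A X₀ B B† is a solution of A X B = C and satisfies ‖X̂ − X₀‖ ≤ ‖X − X₀‖ (Frobenius norm) for every solution X of A X B = C. -/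
open Matrix Kronecker

/-- Column-stacking vectorization: `vec M (j, i) = M i j`. -/

lemma frob_eq_trace {m n : ℕ} (M : Matrix (Fin m) (Fin n) ℝ) :
    (∑ i, ∑ j, (M i j) ^ 2) = Matrix.trace (Mᵀ * M) := by
  simp [Matrix.trace, Matrix.mul_apply, Matrix.diag, pow_two]
  exact Finset.sum_comm

lemma proj_frob_sq_le {n p : ℕ} (P : Matrix (Fin n) (Fin n) ℝ) (Q : Matrix (Fin p) (Fin p) ℝ)
    (hP1 : P * P = P) (hP2 : Pᵀ = P) (hQ1 : Q * Q = Q) (hQ2 : Qᵀ = Q)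
    (Y : Matrix (Fin n) (Fin p) ℝ) :
    Matrix.trace ((P * Y * Q)ᵀ * (P * Y * Q)) ≤ Matrix.trace (Yᵀ * Y) := by
  have hPm : ∀ (M : Matrix (Fin n) (Fin p) ℝ), P * (P * M) = P * M := fun M => by
    rw [← Matrix.mul_assoc, hP1]
  set Z := P * Y * Q with hZ
  have horth : Matrix.trace (Zᵀ * (Y - Z)) = 0 := by
    have hZt : Zᵀ = Q * Yᵀ * P := by
      rw [hZ, Matrix.transpose_mul, Matrix.transpose_mul, hP2, hQ2, Matrix.mul_assoc]
    rw [Matrix.mul_sub, Matrix.trace_sub, hZt, hZ]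
    have h1 : Matrix.trace (Q * Yᵀ * P * (P * Y * Q)) = Matrix.trace (Q * Yᵀ * P * Y) := by
      rw [show Q * Yᵀ * P * (P * Y * Q) = Q * (Yᵀ * P * Y * Q) from by
            simp only [Matrix.mul_assoc, hPm],
          Matrix.trace_mul_comm Q (Yᵀ * P * Y * Q),
          show Yᵀ * P * Y * Q * Q = (Yᵀ * P * Y) * Q from by
            simp only [Matrix.mul_assoc, hQ1],
          Matrix.trace_mul_comm (Yᵀ * P * Y) Q,
          show Q * (Yᵀ * P * Y) = Q * Yᵀ * P * Y from by simp only [Matrix.mul_assoc]]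
    rw [h1, sub_self]
  have hsplit : Matrix.trace (Yᵀ * Y)
      = Matrix.trace (Zᵀ * Z) + Matrix.trace ((Y - Z)ᵀ * (Y - Z)) := by
    have horth2 : Matrix.trace ((Y - Z)ᵀ * Z) = 0 := by
      rw [← Matrix.trace_transpose ((Y - Z)ᵀ * Z), Matrix.transpose_mul,
          Matrix.transpose_transpose]
      exact horth
    have hY : Yᵀ * Y = Zᵀ * Z + Zᵀ * (Y - Z) + ((Y - Z)ᵀ * Z + (Y - Z)ᵀ * (Y - Z)) := by
      have hY' : Y = Z + (Y - Z) := by abel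
      calc Yᵀ * Y = (Z + (Y - Z))ᵀ * (Z + (Y - Z)) := by rw [← hY']
        _ = _ := by rw [Matrix.transpose_add, Matrix.add_mul, Matrix.mul_add, Matrix.mul_add]
    rw [hY, Matrix.trace_add, Matrix.trace_add, Matrix.trace_add, horth, horth2]
    ring
  have hnn : 0 ≤ Matrix.trace ((Y - Z)ᵀ * (Y - Z)) := by
    rw [← frob_eq_trace]
    positivity
  linarith

theorem stmt_6' {m n p r : ℕ}
    (A : Matrix (Fin m) (Fin n) ℝ) (B : Matrix (Fin p) (Fin r) ℝ) (C : Matrix (Fin m) (Fin r) ℝ)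
    (Ad : Matrix (Fin n) (Fin m) ℝ) (Bd : Matrix (Fin r) (Fin p) ℝ)
    (hA : A * Ad * A = A ∧ Ad * A * Ad = Ad ∧ (A * Ad)ᵀ = A * Ad ∧ (Ad * A)ᵀ = Ad * A)
    (hB : B * Bd * B = B ∧ Bd * B * Bd = Bd ∧ (B * Bd)ᵀ = B * Bd ∧ (Bd * B)ᵀ = Bd * B)
    (X₀ : Matrix (Fin n) (Fin p) ℝ)
    (hcon : ∃ X : Matrix (Fin n) (Fin p) ℝ, A * X * B = C) :
    A * (Ad * C * Bd + X₀ - Ad * A * X₀ * B * Bd) * B = C ∧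
    ∀ X : Matrix (Fin n) (Fin p) ℝ, A * X * B = C →
      Real.sqrt (∑ i, ∑ j, ((Ad * C * Bd + X₀ - Ad * A * X₀ * B * Bd - X₀) i j) ^ 2)
        ≤ Real.sqrt (∑ i, ∑ j, ((X - X₀) i j) ^ 2) := by
  obtain ⟨hA1, hA2, hA3, hA4⟩ := hA
  obtain ⟨hB1, hB2, hB3, hB4⟩ := hB
  constructor
  · obtain ⟨X, hX⟩ := hcon
    subst hX
    simp only [Matrix.mul_add, Matrix.add_mul, Matrix.mul_sub, Matrix.sub_mul]
    have e1 : A * (Ad * (A * X * B) * Bd) * B = A * X * B := by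
      calc A * (Ad * (A * X * B) * Bd) * B
          = (A * Ad * A) * X * (B * Bd * B) := by simp only [Matrix.mul_assoc]
        _ = A * X * B := by rw [hA1, hB1]
    have e2 : A * (Ad * A * X₀ * B * Bd) * B = A * X₀ * B := by
      calc A * (Ad * A * X₀ * B * Bd) * B
          = (A * Ad * A) * X₀ * (B * Bd * B) := by simp only [Matrix.mul_assoc]
        _ = A * X₀ * B := by rw [hA1, hB1]
    rw [e1, e2]
    abel
  · intro X hX
    have hdiff : Ad * C * Bd + X₀ - Ad * A * X₀ * B * Bd - X₀
        = (Ad * A) * (X - X₀) * (B * Bd) := by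
      rw [← hX]
      have : Ad * (A * X * B) * Bd = Ad * A * X * (B * Bd) := by
        simp only [Matrix.mul_assoc]
      rw [this]
      simp only [Matrix.mul_sub, Matrix.sub_mul, Matrix.mul_assoc]
      abel
    rw [hdiff]
    apply Real.sqrt_le_sqrt
    rw [frob_eq_trace, frob_eq_trace]
    exact proj_frob_sq_le (Ad * A) (B * Bd)
      (by calc Ad * A * (Ad * A) = Ad * (A * Ad * A) := by simp only [Matrix.mul_assoc]
            _ = Ad * A := by rw [hA1])
      hA4
      (by calc B * Bd * (B * Bd) = (B * Bd * B) * Bd := by simp only [Matrix.mul_assoc]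
            _ = B * Bd := by rw [hB1])
      hB3
      (X - X₀)


theorem stmt_6 {m n p r : ℕ}
    (A : Matrix (Fin m) (Fin n) ℝ) (B : Matrix (Fin p) (Fin r) ℝ) (C : Matrix (Fin m) (Fin r) ℝ)
    (Ad : Matrix (Fin n) (Fin m) ℝ) (Bd : Matrix (Fin r) (Fin p) ℝ)
    (hA : IsMP A Ad) (hB : IsMP B Bd)
    (X₀ : Matrix (Fin n) (Fin p) ℝ)
    (hcon : ∃ X : Matrix (Fin n) (Fin p) ℝ, A * X * B = C) :
    A * (Ad * C * Bd + X₀ - Ad * A * X₀ * B * Bd) * B = C ∧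
    ∀ X : Matrix (Fin n) (Fin p) ℝ, A * X * B = C →
      frobNorm (Ad * C * Bd + X₀ - Ad * A * X₀ * B * Bd - X₀) ≤ frobNorm (X - X₀) := by
  unfold frobNorm
  exact stmt_6' A B C Ad Bd hA hB X₀ hcon
end

section
/- Let A ∈ ℝ^{m×n}, B ∈ ℝ^{p×r}, C ∈ ℝ^{m×r}, and X₀ ∈ ℝ^{n×p}. Then X̂ = A† C B† + X₀ − A† A X₀ B B† is a least squares solution of A X B = C (minimizes ‖A X B − C‖ in Frobenius norm), and for every other least squares solution X one has ‖X̂ − X₀‖ ≤ ‖X − X₀‖. -/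
open Matrix Kronecker

section Aux

variable {a b c d : Type*} [Fintype a] [Fintype b] [Fintype c] [Fintype d]

/-- Frobenius inner product. -/
noncomputable def fip (M N : Matrix a b ℝ) : ℝ := ∑ i, ∑ j, M i j * N i j

lemma fip_self_nonneg (M : Matrix a b ℝ) : 0 ≤ fip M M :=
  Finset.sum_nonneg fun i _ => Finset.sum_nonneg fun j _ => mul_self_nonneg _

lemma frobNorm_eq_fip (M : Matrix a b ℝ) : frobNorm M = Real.sqrt (fip M M) := by
  simp [frobNorm, fip, sq]

lemma fip_zero_right (M : Matrix a b ℝ) : fip M 0 = 0 := by simp [fip]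

lemma fip_comm (M N : Matrix a b ℝ) : fip M N = fip N M := by
  simp [fip, mul_comm]

lemma fip_add_left (M N P : Matrix a b ℝ) : fip (M + N) P = fip M P + fip N P := by
  simp [fip, Matrix.add_apply, add_mul, Finset.sum_add_distrib]

lemma fip_add_right (M N P : Matrix a b ℝ) : fip M (N + P) = fip M N + fip M P := by
  rw [fip_comm, fip_add_left, fip_comm N M, fip_comm P M]

lemma fip_pyth (U V : Matrix a b ℝ) (h : fip U V = 0) :
    fip (U + V) (U + V) = fip U U + fip V V := by
  rw [fip_add_left, fip_add_right, fip_add_right, fip_comm V U, h]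
  ring

lemma fip_eq_trace (M N : Matrix a b ℝ) : fip M N = Matrix.trace (Mᵀ * N) := by
  simp only [Matrix.trace, Matrix.diag, Matrix.mul_apply, Matrix.transpose_apply, fip]
  rw [Finset.sum_comm]

lemma fip_proj (P : Matrix a c ℝ) (M : Matrix c d ℝ) (Q : Matrix d b ℝ) (N : Matrix a b ℝ) :
    fip (P * M * Q) N = fip M (Pᵀ * N * Qᵀ) := by
  rw [fip_eq_trace, fip_eq_trace, Matrix.transpose_mul, Matrix.transpose_mul,
    Matrix.mul_assoc Qᵀ, Matrix.trace_mul_comm]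
  simp [Matrix.mul_assoc]

lemma fip_self_eq_zero (M : Matrix a b ℝ) (h : fip M M = 0) : M = 0 := by
  ext i j
  have h1 := (Finset.sum_eq_zero_iff_of_nonneg
    (fun i _ => Finset.sum_nonneg fun j _ => mul_self_nonneg (M i j))).mp h i (Finset.mem_univ i)
  have h2 := (Finset.sum_eq_zero_iff_of_nonneg
    (fun j _ => mul_self_nonneg (M i j))).mp h1 j (Finset.mem_univ j)
  simpa using mul_self_eq_zero.mp h2

lemma absorb {A : Matrix a b ℝ} {Ad : Matrix b a ℝ} (h : A * Ad * A = A)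
    (Z : Matrix b c ℝ) : A * (Ad * (A * Z)) = A * Z := by
  simp only [← Matrix.mul_assoc, h]

lemma absorbT {A : Matrix a b ℝ} {Ad : Matrix b a ℝ} (h : A * Ad * A = A) :
    A * (Ad * A) = A := by rw [← Matrix.mul_assoc, h]

end Aux

theorem stmt_7 {m n p r : ℕ}
    (A : Matrix (Fin m) (Fin n) ℝ) (B : Matrix (Fin p) (Fin r) ℝ) (C : Matrix (Fin m) (Fin r) ℝ)
    (Ad : Matrix (Fin n) (Fin m) ℝ) (Bd : Matrix (Fin r) (Fin p) ℝ)
    (hA : IsMP A Ad) (hB : IsMP B Bd)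
    (X₀ : Matrix (Fin n) (Fin p) ℝ) :
    (∀ X : Matrix (Fin n) (Fin p) ℝ,
      frobNorm (A * (Ad * C * Bd + X₀ - Ad * A * X₀ * B * Bd) * B - C) ≤
        frobNorm (A * X * B - C)) ∧
    (∀ X : Matrix (Fin n) (Fin p) ℝ,
      (∀ Y : Matrix (Fin n) (Fin p) ℝ, frobNorm (A * X * B - C) ≤ frobNorm (A * Y * B - C)) →
      frobNorm (Ad * C * Bd + X₀ - Ad * A * X₀ * B * Bd - X₀) ≤ frobNorm (X - X₀)) := by
  obtain ⟨hA1, hA2, hA3, hA4⟩ := hA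
  obtain ⟨hB1, hB2, hB3, hB4⟩ := hB
  -- D = P C Q with P = A Ad, Q = Bd B
  -- residual of X̂ is D - C
  have hres : A * (Ad * C * Bd + X₀ - Ad * A * X₀ * B * Bd) * B - C
      = A * (Ad * (C * (Bd * B))) - C := by
    simp only [Matrix.mul_add, Matrix.mul_sub, Matrix.add_mul, Matrix.sub_mul,
      Matrix.mul_assoc, absorbT hB1, absorb hA1]
    abel
  -- P (D - C) Q = 0
  have hzero : (A * Ad) * (A * (Ad * (C * (Bd * B))) - C) * (Bd * B) = 0 := by
    simp only [Matrix.mul_sub, Matrix.sub_mul, Matrix.mul_assoc,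
      absorbT hB1, absorb hA2, sub_self]
  -- A X B - D = P (A X B - D) Q
  have hVform : ∀ X : Matrix (Fin n) (Fin p) ℝ,
      A * X * B - A * (Ad * (C * (Bd * B)))
        = (A * Ad) * (A * X * B - A * (Ad * (C * (Bd * B)))) * (Bd * B) := by
    intro X
    simp only [Matrix.mul_sub, Matrix.sub_mul, Matrix.mul_assoc,
      absorbT hB1, absorb hA1, absorb hA2]
  have horth : ∀ X : Matrix (Fin n) (Fin p) ℝ,
      fip (A * X * B - A * (Ad * (C * (Bd * B)))) (A * (Ad * (C * (Bd * B))) - C) = 0 := by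
    intro X
    rw [hVform X, fip_proj, hA3, hB4, hzero, fip_zero_right]
  have hsplit : ∀ X : Matrix (Fin n) (Fin p) ℝ,
      A * X * B - C = (A * X * B - A * (Ad * (C * (Bd * B))))
        + (A * (Ad * (C * (Bd * B))) - C) := fun X => (sub_add_sub_cancel _ _ _).symm
  -- fip of residual of X̂ is ≤ fip of any residual
  have hfiple : ∀ X : Matrix (Fin n) (Fin p) ℝ,
      fip (A * (Ad * (C * (Bd * B))) - C) (A * (Ad * (C * (Bd * B))) - C)
        ≤ fip (A * X * B - C) (A * X * B - C) := by
    intro X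
    rw [hsplit X, fip_pyth _ _ (horth X)]
    have := fip_self_nonneg (A * X * B - A * (Ad * (C * (Bd * B))))
    linarith
  constructor
  · intro X
    rw [hres, frobNorm_eq_fip, frobNorm_eq_fip]
    exact Real.sqrt_le_sqrt (hfiple X)
  · intro X hX
    -- X is a minimizer, hence A X B = D
    have hle := hX (Ad * C * Bd + X₀ - Ad * A * X₀ * B * Bd)
    rw [hres, frobNorm_eq_fip, frobNorm_eq_fip] at hle
    have heq : fip (A * X * B - C) (A * X * B - C)
        = fip (A * (Ad * (C * (Bd * B))) - C) (A * (Ad * (C * (Bd * B))) - C) := by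
      refine le_antisymm ?_ (hfiple X)
      exact (Real.sqrt_le_sqrt_iff (fip_self_nonneg _)).mp hle
    have hV0 : A * X * B - A * (Ad * (C * (Bd * B))) = 0 := by
      apply fip_self_eq_zero
      have hp := fip_pyth _ _ (horth X)
      rw [← hsplit X] at hp
      rw [heq] at hp
      linarith
    have hXD : A * X * B = A * (Ad * (C * (Bd * B))) := sub_eq_zero.mp hV0
    -- X̂ - X₀ = (Ad A)(X - X₀)(B Bd)
    have h5 : Ad * (A * (X * (B * Bd))) = Ad * (C * Bd) := by
      have := congrArg (fun M => Ad * M * Bd) hXD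
      simpa only [Matrix.mul_assoc, absorbT hB2, absorb hA2] using this
    have hXhat : Ad * C * Bd + X₀ - Ad * A * X₀ * B * Bd - X₀
        = (Ad * A) * (X - X₀) * (B * Bd) := by
      simp only [Matrix.mul_sub, Matrix.sub_mul, Matrix.mul_assoc]
      rw [← h5]
      abel
    -- contraction property
    have horth2 : fip ((Ad * A) * (X - X₀) * (B * Bd))
        ((X - X₀) - (Ad * A) * (X - X₀) * (B * Bd)) = 0 := by
      rw [fip_proj, hA4, hB3]
      have hz : (Ad * A) * ((X - X₀) - (Ad * A) * (X - X₀) * (B * Bd)) * (B * Bd) = 0 := by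
        simp only [Matrix.mul_sub, Matrix.sub_mul, Matrix.mul_assoc,
          absorbT hB2, absorb hA2, absorb hA1, absorb hB1, sub_self]
      rw [hz, fip_zero_right]
    have hfin : fip ((Ad * A) * (X - X₀) * (B * Bd)) ((Ad * A) * (X - X₀) * (B * Bd))
        ≤ fip (X - X₀) (X - X₀) := by
      have hp := fip_pyth _ _ horth2
      rw [add_sub_cancel] at hp
      have := fip_self_nonneg ((X - X₀) - (Ad * A) * (X - X₀) * (B * Bd))
      linarith
    rw [hXhat, frobNorm_eq_fip, frobNorm_eq_fip]
    exact Real.sqrt_le_sqrt hfin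
end

section
/- The matrix X̂ = A† C B† + X₀ − A† A X₀ B B† is the unique minimizer of ‖X − X₀‖ over the set of solutions of the consistent equation A X B = C. -/
open Matrix Kronecker

lemma sum_sq_eq_trace' {a b : ℕ} (M : Matrix (Fin a) (Fin b) ℝ) :
    ∑ i, ∑ j, (M i j) ^ 2 = Matrix.trace (Mᵀ * M) := by
  rw [Matrix.trace]
  simp only [Matrix.diag, Matrix.mul_apply, Matrix.transpose_apply, sq]
  exact Finset.sum_comm

lemma pyth_lemma {n p : ℕ} (P : Matrix (Fin n) (Fin n) ℝ) (Q : Matrix (Fin p) (Fin p) ℝ)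
    (hP : Pᵀ = P) (hQ : Qᵀ = Q) (hPP : P * P = P) (hQQ : Q * Q = Q)
    (Y : Matrix (Fin n) (Fin p) ℝ) :
    (∑ i, ∑ j, (Y i j) ^ 2) =
      (∑ i, ∑ j, ((P * Y * Q) i j) ^ 2) + (∑ i, ∑ j, ((Y - P * Y * Q) i j) ^ 2) := by
  have horth : Matrix.trace ((P * Y * Q)ᵀ * (Y - P * Y * Q)) = 0 := by
    have hUT : (P * Y * Q)ᵀ = Q * Yᵀ * P := by
      simp only [Matrix.transpose_mul, hP, hQ, Matrix.mul_assoc]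
    rw [hUT, Matrix.mul_sub, Matrix.trace_sub]
    have : Matrix.trace (Q * Yᵀ * P * (P * Y * Q)) = Matrix.trace (Q * Yᵀ * P * Y) := by
      calc Matrix.trace (Q * Yᵀ * P * (P * Y * Q))
          = Matrix.trace ((P * Y * Q) * (Q * Yᵀ * P)) := by rw [Matrix.trace_mul_comm]
        _ = Matrix.trace (P * (Y * (Q * Q) * (Yᵀ * P))) := by
            simp only [Matrix.mul_assoc]
        _ = Matrix.trace (P * (Y * Q * (Yᵀ * P))) := by rw [hQQ]
        _ = Matrix.trace ((Y * Q * (Yᵀ * P)) * P) := by rw [Matrix.trace_mul_comm]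
        _ = Matrix.trace (Y * Q * (Yᵀ * (P * P))) := by simp only [Matrix.mul_assoc]
        _ = Matrix.trace (Y * Q * (Yᵀ * P)) := by rw [hPP]
        _ = Matrix.trace ((Yᵀ * P) * (Y * Q)) := by rw [Matrix.trace_mul_comm]
        _ = Matrix.trace ((Yᵀ * P * Y) * Q) := by simp only [Matrix.mul_assoc]
        _ = Matrix.trace (Q * (Yᵀ * P * Y)) := by rw [Matrix.trace_mul_comm]
        _ = Matrix.trace (Q * Yᵀ * P * Y) := by simp only [Matrix.mul_assoc]
    rw [this, sub_self]
  have h2 : Matrix.trace ((Y - P * Y * Q)ᵀ * (P * Y * Q)) = 0 := by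
    rw [← Matrix.trace_transpose ((Y - P * Y * Q)ᵀ * (P * Y * Q)),
      Matrix.transpose_mul, Matrix.transpose_transpose, horth]
  have hsplit : Y = P * Y * Q + (Y - P * Y * Q) := by abel
  rw [sum_sq_eq_trace', sum_sq_eq_trace', sum_sq_eq_trace']
  conv_lhs => rw [hsplit]
  simp only [Matrix.transpose_add, Matrix.add_mul, Matrix.mul_add, Matrix.trace_add]
  rw [horth, h2]
  ring

theorem stmt_8 {m n p r : ℕ}
    (A : Matrix (Fin m) (Fin n) ℝ) (B : Matrix (Fin p) (Fin r) ℝ) (C : Matrix (Fin m) (Fin r) ℝ)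
    (Ad : Matrix (Fin n) (Fin m) ℝ) (Bd : Matrix (Fin r) (Fin p) ℝ)
    (hA : IsMP A Ad) (hB : IsMP B Bd)
    (X₀ : Matrix (Fin n) (Fin p) ℝ)
    (hcon : ∃ X : Matrix (Fin n) (Fin p) ℝ, A * X * B = C) :
    A * (Ad * C * Bd + X₀ - Ad * A * X₀ * B * Bd) * B = C ∧
    (∀ X : Matrix (Fin n) (Fin p) ℝ, A * X * B = C →
      frobNorm (Ad * C * Bd + X₀ - Ad * A * X₀ * B * Bd - X₀) ≤ frobNorm (X - X₀)) ∧
    (∀ X : Matrix (Fin n) (Fin p) ℝ, A * X * B = C →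
      frobNorm (X - X₀) = frobNorm (Ad * C * Bd + X₀ - Ad * A * X₀ * B * Bd - X₀) →
      X = Ad * C * Bd + X₀ - Ad * A * X₀ * B * Bd) := by
  obtain ⟨hA1, hA2, hA3, hA4⟩ := hA
  obtain ⟨hB1, hB2, hB3, hB4⟩ := hB
  have hPP : (Ad * A) * (Ad * A) = Ad * A := by
    calc (Ad * A) * (Ad * A) = (Ad * A * Ad) * A := by
          simp only [Matrix.mul_assoc]
      _ = Ad * A := by rw [hA2]
  have hQQ : (B * Bd) * (B * Bd) = B * Bd := by
    calc (B * Bd) * (B * Bd) = (B * Bd * B) * Bd := by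
          simp only [Matrix.mul_assoc]
      _ = B * Bd := by rw [hB1]
  have hhat : ∀ X : Matrix (Fin n) (Fin p) ℝ, A * X * B = C →
      Ad * C * Bd + X₀ - Ad * A * X₀ * B * Bd - X₀ = (Ad * A) * (X - X₀) * (B * Bd) := by
    intro X hX
    rw [← hX]
    simp only [Matrix.mul_sub, Matrix.sub_mul, Matrix.mul_assoc]
    abel
  have part1 : A * (Ad * C * Bd + X₀ - Ad * A * X₀ * B * Bd) * B = C := by
    obtain ⟨X, hX⟩ := hcon
    rw [← hX]
    have h1 : A * (Ad * (A * X * B) * Bd) * B = A * X * B := by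
      calc A * (Ad * (A * X * B) * Bd) * B
          = (A * Ad * A) * (X * (B * Bd * B)) := by simp only [Matrix.mul_assoc]
        _ = A * (X * B) := by rw [hA1, hB1]
        _ = A * X * B := by rw [Matrix.mul_assoc]
    have h2 : A * (Ad * A * X₀ * B * Bd) * B = A * X₀ * B := by
      calc A * (Ad * A * X₀ * B * Bd) * B
          = (A * Ad * A) * (X₀ * (B * Bd * B)) := by simp only [Matrix.mul_assoc]
        _ = A * (X₀ * B) := by rw [hA1, hB1]
        _ = A * X₀ * B := by rw [Matrix.mul_assoc]
    calc A * (Ad * (A * X * B) * Bd + X₀ - Ad * A * X₀ * B * Bd) * B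
        = A * (Ad * (A * X * B) * Bd) * B + A * X₀ * B - A * (Ad * A * X₀ * B * Bd) * B := by
          simp only [Matrix.mul_add, Matrix.add_mul, Matrix.mul_sub, Matrix.sub_mul]
      _ = A * X * B := by rw [h1, h2]; abel
  have pyth := pyth_lemma (Ad * A) (B * Bd) hA4 hB3 hPP hQQ
  have hSnonneg : ∀ (M : Matrix (Fin n) (Fin p) ℝ),
      (0:ℝ) ≤ ∑ i, ∑ j, (M i j) ^ 2 := fun M => by positivity
  refine ⟨part1, ?_, ?_⟩
  · intro X hX
    rw [hhat X hX, frobNorm, frobNorm]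
    apply Real.sqrt_le_sqrt
    rw [pyth (X - X₀)]
    have := hSnonneg (X - X₀ - (Ad * A) * (X - X₀) * (B * Bd))
    linarith
  · intro X hX heq
    rw [hhat X hX, frobNorm, frobNorm, pyth (X - X₀)] at heq
    have h1 := hSnonneg ((Ad * A) * (X - X₀) * (B * Bd))
    have h2 := hSnonneg (X - X₀ - (Ad * A) * (X - X₀) * (B * Bd))
    have heq2 : (∑ i, ∑ j, (((Ad * A) * (X - X₀) * (B * Bd)) i j) ^ 2)
        + (∑ i, ∑ j, ((X - X₀ - (Ad * A) * (X - X₀) * (B * Bd)) i j) ^ 2)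
        = ∑ i, ∑ j, (((Ad * A) * (X - X₀) * (B * Bd)) i j) ^ 2 :=
      (Real.sqrt_inj (by linarith) h1).mp heq
    have hV0 : ∀ i j, (X - X₀ - (Ad * A) * (X - X₀) * (B * Bd)) i j = 0 := by
      have hz : ∑ i, ∑ j, ((X - X₀ - (Ad * A) * (X - X₀) * (B * Bd)) i j) ^ 2 = 0 := by
        linarith
      intro i j
      have hi := (Finset.sum_eq_zero_iff_of_nonneg (fun i _ => by positivity)).mp hz i
        (Finset.mem_univ i)
      have hj := (Finset.sum_eq_zero_iff_of_nonneg (fun j _ => by positivity)).mp hi j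
        (Finset.mem_univ j)
      exact pow_eq_zero_iff (by norm_num) |>.mp hj
    have hVeq : X - X₀ = (Ad * A) * (X - X₀) * (B * Bd) := by
      ext i j
      have := hV0 i j
      simp only [Matrix.sub_apply] at this ⊢
      linarith
    have := hhat X hX
    rw [← hVeq] at this
    exact (sub_left_inj.mp this).symm
end

section
/- For X ∈ ℝ^{n×p}, vec(A† C B† + X − A† A X B B†) = (Bᵀ ⊗ A)† vec(C) + (I − (Bᵀ ⊗ A)† (Bᵀ ⊗ A)) vec(X); that is, the matrix form of the best approximate solution corresponds under vectorization to the vector form. -/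
open Matrix Kronecker

/-! The Penrose conditions are preserved by transposition and Kronecker products, so
`Bdᵀ ⊗ₖ Ad` is a Moore–Penrose inverse of `Bᵀ ⊗ₖ A`, hence equal to `K` by uniqueness. The identity
then follows from `(Bᵀ ⊗ₖ A) *ᵥ vec X = vec (A * X * B)` and linearity of `vec`. -/

namespace IsMP

variable {m n : Type*} [Fintype m] [Fintype n] [DecidableEq m] [DecidableEq n]

lemma transpose {A : Matrix m n ℝ} {Ad : Matrix n m ℝ} (h : IsMP A Ad) : IsMP Aᵀ Adᵀ := by
  obtain ⟨h₁, h₂, h₃, h₄⟩ := h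
  refine ⟨?_, ?_, ?_, ?_⟩
  · rw [Matrix.mul_assoc, ← transpose_mul, ← transpose_mul, h₁]
  · rw [Matrix.mul_assoc, ← transpose_mul, ← transpose_mul, h₂]
  · rw [← transpose_mul, h₄, h₄]
  · rw [← transpose_mul, h₃, h₃]

lemma kronecker {p r : Type*} [Fintype p] [Fintype r] [DecidableEq p] [DecidableEq r]
    {A : Matrix m n ℝ} {Ad : Matrix n m ℝ} {B : Matrix p r ℝ} {Bd : Matrix r p ℝ}
    (hA : IsMP A Ad) (hB : IsMP B Bd) : IsMP (B ⊗ₖ A) (Bd ⊗ₖ Ad) := by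
  obtain ⟨hA₁, hA₂, hA₃, hA₄⟩ := hA
  obtain ⟨hB₁, hB₂, hB₃, hB₄⟩ := hB
  refine ⟨?_, ?_, ?_, ?_⟩
  · rw [← mul_kronecker_mul, ← mul_kronecker_mul, hA₁, hB₁]
  · rw [← mul_kronecker_mul, ← mul_kronecker_mul, hA₂, hB₂]
  · rw [← mul_kronecker_mul, ← kroneckerMap_transpose, hA₃, hB₃]
  · rw [← mul_kronecker_mul, ← kroneckerMap_transpose, hA₄, hB₄]

lemma unique {A : Matrix m n ℝ} {K₁ K₂ : Matrix n m ℝ} (h₁ : IsMP A K₁) (h₂ : IsMP A K₂) :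
    K₁ = K₂ := by
  obtain ⟨h₁₁, h₁₂, h₁₃, h₁₄⟩ := h₁
  obtain ⟨h₂₁, h₂₂, h₂₃, h₂₄⟩ := h₂
  have hAK : A * K₁ = A * K₂ :=
    calc A * K₁ = (A * K₂) * (A * K₁) := by rw [← Matrix.mul_assoc, h₂₁]
    _ = (A * K₁ * (A * K₂))ᵀ := by rw [transpose_mul, h₁₃, h₂₃]
    _ = A * K₂ := by rw [← Matrix.mul_assoc, h₁₁, h₂₃]
  have hKA : K₁ * A = K₂ * A :=
    calc K₁ * A = (K₁ * A) * (K₂ * A) := by rw [Matrix.mul_assoc, ← Matrix.mul_assoc A, h₂₁]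
    _ = (K₂ * A * (K₁ * A))ᵀ := by rw [transpose_mul, h₁₄, h₂₄]
    _ = K₂ * A := by rw [Matrix.mul_assoc, ← Matrix.mul_assoc A, h₁₁, h₂₄]
  calc K₁ = K₁ * (A * K₁) := by rw [← Matrix.mul_assoc, h₁₂]
  _ = K₂ * A * K₂ := by rw [hAK, ← Matrix.mul_assoc, hKA]
  _ = K₂ := h₂₂

end IsMP

lemma vec_eq_matrix_vec {m n : Type*} (M : Matrix m n ℝ) : _root_.vec M = M.vec := rfl

theorem stmt_18 {m n p r : ℕ}
    (A : Matrix (Fin m) (Fin n) ℝ) (B : Matrix (Fin p) (Fin r) ℝ) (C : Matrix (Fin m) (Fin r) ℝ)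
    (Ad : Matrix (Fin n) (Fin m) ℝ) (Bd : Matrix (Fin r) (Fin p) ℝ)
    (hA : IsMP A Ad) (hB : IsMP B Bd)
    (K : Matrix (Fin p × Fin n) (Fin r × Fin m) ℝ) (hK : IsMP (Bᵀ ⊗ₖ A) K)
    (X : Matrix (Fin n) (Fin p) ℝ) :
    _root_.vec (Ad * C * Bd + X - Ad * A * X * B * Bd) =
      K.mulVec (_root_.vec C) +
        ((1 : Matrix (Fin p × Fin n) (Fin p × Fin n) ℝ) - K * (Bᵀ ⊗ₖ A)).mulVec (_root_.vec X) := by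
  obtain rfl : K = Bdᵀ ⊗ₖ Ad := hK.unique (hA.kronecker hB.transpose)
  have hKK : Bdᵀ ⊗ₖ Ad * (Bᵀ ⊗ₖ A) = (B * Bd)ᵀ ⊗ₖ (Ad * A) := by
    rw [← mul_kronecker_mul, transpose_mul]
  simp only [vec_eq_matrix_vec, sub_mulVec, one_mulVec, hKK, kronecker_mulVec_vec,
    transpose_transpose, vec_add, vec_sub, Matrix.mul_assoc]
  abel
end
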